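/- Under the assumptions that a transaction spends its input forever after (H holds at all later times), that a transaction requires its input to be free at all earlier times, that free and spent are mutually exclusive (F τ x ↔ ¬H τ x), and that time is dense (between any x before y there is z with x before z and z before y), the same token cannot be the input of two transactions at two times one of which is strictly before the other: for all times x, y and tokens τ₁, τ₂, if Tx τ₁ x and Tx τ₂ y and x R y, then τ₁ ≠ τ₂. -/

import Mathlib

theorem stmt_4 {Time Token : Type*} (R : Time → Time → Prop)
    (Tx : Token → Time → Prop) (F H : Token → Time → Prop)
    (h1 : ∀ x τ, Tx τ x → ∀ y, R x y → H τ y)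
    (h2 : ∀ x τ, Tx τ x → ∀ z, R z x → F τ z)
    (h3 : ∀ x τ, F τ x ↔ ¬ H τ x)
    (hdense : ∀ x y, R x y → ∃ z, R x z ∧ R z y) :
    ∀ x y (τ₁ τ₂ : Token), Tx τ₁ x → Tx τ₂ y → R x y → τ₁ ≠ τ₂ := by
  rintro x y τ τ hx hy hxy rfl
  obtain ⟨z, hxz, hzy⟩ := hdense x y hxy
  have hspent : H τ z := h1 x τ hx z hxz
  have hfree : F τ z := h2 y τ hy z hzy
  exact (h3 z τ).mp hfree hspent
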